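/- Consider the state-based algorithm with parameters (ω, φ) and decidable predicate R. For every i ∈ ℕ, the i-th state sᵢ of any run started at s₀ = λn.none satisfies the invariant: for all n ∈ ℕ, if xₙ ∉ M[sᵢ] (i.e., sᵢ(n) = some p for some p ∈ ℕ), then ¬R(M[sᵢ]↾n ∪ {xₙ}, f[sᵢ](n)). -/

import Mathlib

-- A state is a function `ℕ → Option ℕ`; `s n = none` means `xₙ ∈ M[s]`, and
-- `s n = some p` means `xₙ ∉ M[s]` with recorded evidence `f[s](n) = p`.

/-- The finite set `M[s]↾n = M[s] ∩ {x_m | m < n}`. -/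
def StateSeg {X : Type*} [DecidableEq X] (x : ℕ → X) (s : ℕ → Option ℕ) (n : ℕ) : Finset X :=
  ((Finset.range n).filter fun m => s m = none).image x

instance decExistsLE (N : ℕ) (p : ℕ → Prop) [DecidablePred p] :
    Decidable (∃ m, m ≤ N ∧ p m) :=
  decidable_of_iff (∃ m, m < N + 1 ∧ p m) (by simp [Nat.lt_succ_iff])

/-- One step of the algorithm with parameters `(ω, φ)` and predicate `R`:
search for the least `n ≤ ω s` with `xₙ ∈ M[s]` and `¬R(M[s]↾n ∪ {xₙ}, φ s)`;
if none exists the state is final (the step returns `s` itself), otherwise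
keep `s` below `n`, record `φ s` at `n`, and put everything above `n` back into `M`. -/
def StateStep {X : Type*} [DecidableEq X] (x : ℕ → X) (R : Finset X → ℕ → Prop)
    [∀ A p, Decidable (R A p)] (ω φ : (ℕ → Option ℕ) → ℕ)
    (s : ℕ → Option ℕ) : ℕ → Option ℕ :=
  if h : ∃ m, m ≤ ω s ∧ s m = none ∧ ¬ R (StateSeg x s m ∪ {x m}) (φ s) then
    fun k => if k < Nat.find h then s k else if k = Nat.find h then some (φ s) else none
  else s

/-- The run of the algorithm started at the initial state `s₀ = λn.none`. -/
def StateRun {X : Type*} [DecidableEq X] (x : ℕ → X) (R : Finset X → ℕ → Prop)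
    [∀ A p, Decidable (R A p)] (ω φ : (ℕ → Option ℕ) → ℕ) : ℕ → ℕ → Option ℕ
  | 0 => fun _ => none
  | i + 1 => StateStep x R ω φ (StateRun x R ω φ i)

/-- A state is final (the algorithm terminates in it) if the search fails. -/
def StateFinal {X : Type*} [DecidableEq X] (x : ℕ → X) (R : Finset X → ℕ → Prop)
    (ω φ : (ℕ → Option ℕ) → ℕ) (s : ℕ → Option ℕ) : Prop :=
  ¬ ∃ m, m ≤ ω s ∧ s m = none ∧ ¬ R (StateSeg x s m ∪ {x m}) (φ s)

/-!
The invariant holds vacuously at `s₀` and survives every step: a step that stops at `N` keeps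
all entries below `N`, hence every segment `M[s]↾k` with `k ≤ N`; the entry it records at `N` is
exactly the witness of the search; and everything above `N` is reset to `none`.
-/

section Invariant

variable {X : Type*} [DecidableEq X] (x : ℕ → X) (R : Finset X → ℕ → Prop)

theorem stateSeg_congr {s t : ℕ → Option ℕ} {n : ℕ} (h : ∀ m < n, s m = t m) :
    StateSeg x s n = StateSeg x t n := by
  unfold StateSeg
  congr 1
  exact Finset.filter_congr fun m hm => by rw [h m (Finset.mem_range.mp hm)]

/-- The branch of `StateStep` taken when the search succeeds at `N`, recording `q := φ s`. -/
def recordAt (s : ℕ → Option ℕ) (N q : ℕ) : ℕ → Option ℕ :=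
  fun k => if k < N then s k else if k = N then some q else none

theorem stateSeg_recordAt_of_le {s : ℕ → Option ℕ} {N q k : ℕ} (hk : k ≤ N) :
    StateSeg x (recordAt s N q) k = StateSeg x s k :=
  stateSeg_congr x fun _ hm => if_pos (lt_of_lt_of_le hm hk)

def StateInvariant (s : ℕ → Option ℕ) : Prop :=
  ∀ n p, s n = some p → ¬ R (StateSeg x s n ∪ {x n}) p

variable {x R}

theorem StateInvariant.recordAt {s : ℕ → Option ℕ} {N q : ℕ} (hs : StateInvariant x R s)
    (hN : ¬ R (StateSeg x s N ∪ {x N}) q) : StateInvariant x R (recordAt s N q) := by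
  intro n p hp
  rcases lt_trichotomy n N with hlt | rfl | hgt
  · rw [stateSeg_recordAt_of_le x hlt.le]
    exact hs n p (by simpa [_root_.recordAt, hlt] using hp)
  · rw [stateSeg_recordAt_of_le x le_rfl]
    obtain rfl : q = p := by simpa [_root_.recordAt] using hp
    exact hN
  · simp [_root_.recordAt, hgt.not_gt, hgt.ne'] at hp

variable [∀ A p, Decidable (R A p)]

theorem StateInvariant.stateStep {s : ℕ → Option ℕ} (hs : StateInvariant x R s)
    (ω φ : (ℕ → Option ℕ) → ℕ) : StateInvariant x R (StateStep x R ω φ s) := by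
  unfold StateStep
  split_ifs with h
  · exact hs.recordAt (Nat.find_spec h).2.2
  · exact hs

theorem stateInvariant_stateRun (ω φ : (ℕ → Option ℕ) → ℕ) :
    ∀ i, StateInvariant x R (StateRun x R ω φ i)
  | 0 => fun _ _ hp => nomatch hp
  | i + 1 => (stateInvariant_stateRun ω φ i).stateStep ω φ

end Invariant

/-- Invariant of the run: if `xₙ ∉ M[sᵢ]`, i.e. `sᵢ n = some p`, then
`¬R(M[sᵢ]↾n ∪ {xₙ}, f[sᵢ](n))`. -/
theorem stmt9 {X : Type*} [DecidableEq X] (x : ℕ → X) (R : Finset X → ℕ → Prop)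
    [∀ A p, Decidable (R A p)] (ω φ : (ℕ → Option ℕ) → ℕ) :
    ∀ (i n : ℕ) (p : ℕ), StateRun x R ω φ i n = some p →
      ¬ R (StateSeg x (StateRun x R ω φ i) n ∪ {x n}) p :=
  stateInvariant_stateRun ω φ
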